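/- arXiv:2212.02376 — 5 statements merged into one kernel-verified Lean document; each statement's English description precedes it below -/
import Mathlib

section
/- Under the stated assumptions, the function l(x) := f(x, y*(x)) is differentiable on E, and its gradient is given by the hypergradient formula ∇l(x) = ∇_x f(x, y*(x)) − ∇²_{xy} g(x, y*(x)) ([∇²_{yy} g(x, y*(x))]⁻¹ (∇_y f(x, y*(x)))); that is, ∇l(x) = ∇̄f(x, y*(x)) for every x ∈ E. -/
/-!
Strong convexity of `g(x, ·)` makes `∇²_{yy} g` coercive, hence invertible, and makes `y*(x)` the
unique zero of `∇_y g(x, ·)`. The implicit function theorem for `(x, y) ↦ ∇_y g(x, y)` therefore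
shows that `y*` is differentiable with `Dy* = -[∇²_{yy} g]⁻¹ ∘ D_x ∇_y g`. The chain rule for
`f(x, y*(x))`, together with the symmetry of `∇²_{yy} g`, turns `∇_x f + (Dy*)† ∇_y f` into
the hypergradient.
-/

open scoped RealInnerProductSpace

noncomputable section

variable {E F : Type*} [NormedAddCommGroup E] [InnerProductSpace ℝ E] [FiniteDimensional ℝ E]
  [NormedAddCommGroup F] [InnerProductSpace ℝ F] [FiniteDimensional ℝ F]

/-- Gradient of `f(·, y)` at `x`. -/
def gradx (f : E × F → ℝ) (x : E) (y : F) : E := gradient (fun x' => f (x', y)) x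

/-- Gradient of `f(x, ·)` at `y`. -/
def grady (f : E × F → ℝ) (x : E) (y : F) : F := gradient (fun y' => f (x, y')) y

/-- Hessian of `g(x, ·)` at `y`, as a continuous linear map `F →L[ℝ] F`. -/
def hessyy (g : E × F → ℝ) (x : E) (y : F) : F →L[ℝ] F :=
  fderiv ℝ (fun y' => grady g x y') y

/-- Mixed second derivative `∇²_{xy} g(x,y) : F →L[ℝ] E`, the adjoint of the derivative at `x`
of the map `x ↦ ∇_y g(x,y)`. -/
def hessxy (g : E × F → ℝ) (x : E) (y : F) : F →L[ℝ] E :=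
  ContinuousLinearMap.adjoint (fderiv ℝ (fun x' => grady g x' y) x)

/-- The surrogate (hyper)gradient
`∇̄f(x,y) = ∇_x f(x,y) − ∇²_{xy} g(x,y) ([∇²_{yy} g(x,y)]⁻¹ (∇_y f(x,y)))`. -/
def barGrad (f g : E × F → ℝ) (x : E) (y : F) : E :=
  gradx f x y - hessxy g x y (Ring.inverse (hessyy g x y) (grady f x y))

open InnerProductSpace ContinuousLinearMap Filter Set

section Convex

variable {V : Type*} [NormedAddCommGroup V] [NormedSpace ℝ V] {h : V → ℝ}

theorem ConvexOn.isMinOn_of_hasFDerivAt_eq_zero {y : V} (hh : ConvexOn ℝ univ h)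
    (hy : HasFDerivAt h (0 : V →L[ℝ] ℝ) y) : IsMinOn h univ y := by
  intro z _
  set ℓ := AffineMap.lineMap (k := ℝ) y z
  have hk : ConvexOn ℝ univ (h ∘ ℓ) := by simpa using hh.comp_affineMap ℓ
  have hℓ0 : ℓ 0 = y := AffineMap.lineMap_apply_zero y z
  have hk' : HasDerivAt (h ∘ ℓ) 0 0 := by
    rw [← hℓ0] at hy
    simpa using hy.comp_hasDerivAt (0 : ℝ) AffineMap.hasDerivAt_lineMap
  simpa [slope, ℓ] using hk.le_slope_of_hasDerivAt (mem_univ 0) (mem_univ 1) one_pos hk'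

end Convex

section Hessian

variable {V : Type*} [NormedAddCommGroup V] [InnerProductSpace ℝ V] [CompleteSpace V]
  {h : V → ℝ} {H : V →L[ℝ] V} {y : V}

theorem ConvexOn.inner_hessian_apply_self_nonneg (hh : ConvexOn ℝ univ h)
    (hd : Differentiable ℝ h) (hH : HasFDerivAt (gradient h) H y) (v : V) :
    0 ≤ ⟪H v, v⟫ := by
  set ℓ := AffineMap.lineMap (k := ℝ) y (y + v)
  have hℓ : ∀ t, HasDerivAt ℓ v t := fun t => by
    simpa using AffineMap.hasDerivAt_lineMap (a := y) (b := y + v) (x := t)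
  have hk : ConvexOn ℝ univ (h ∘ ℓ) := by simpa using hh.comp_affineMap ℓ
  have hk' : ∀ t, HasDerivAt (h ∘ ℓ) ⟪gradient h (ℓ t), v⟫ t := fun t => by
    rw [inner_gradient_left]
    exact (hd (ℓ t)).hasFDerivAt.comp_hasDerivAt t (hℓ t)
  have hderiv : deriv (h ∘ ℓ) = fun t => ⟪gradient h (ℓ t), v⟫ := funext fun t => (hk' t).deriv
  have hmono : Monotone fun t => ⟪gradient h (ℓ t), v⟫ := by
    simpa only [hderiv, monotoneOn_univ] using
      hk.monotoneOn_deriv fun t _ => (hk' t).differentiableAt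
  have hder : HasDerivAt (fun t => ⟪gradient h (ℓ t), v⟫) ⟪H v, v⟫ 0 := by
    have h0 : HasFDerivAt (gradient h) H (ℓ 0) := by simpa [ℓ] using hH
    simpa using (h0.comp_hasDerivAt 0 (hℓ 0)).inner ℝ (hasDerivAt_const 0 v)
  simpa only [hder.deriv] using hmono.deriv_nonneg (x := 0)

theorem hasGradientAt_half_mul_norm_sq (m : ℝ) (x : V) :
    HasGradientAt (fun x => m / 2 * ‖x‖ ^ 2) (m • x) x := by
  rw [hasGradientAt_iff_hasFDerivAt]
  refine ((hasStrictFDerivAt_norm_sq x).hasFDerivAt.const_mul (m / 2)).congr_fderiv ?_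
  ext v
  simp only [smul_apply, coe_innerSL_apply, nsmul_eq_mul, Nat.cast_ofNat, smul_eq_mul, map_smul,
    toDual_apply_apply]
  ring

theorem StrongConvexOn.inner_hessian_apply_self_ge {m : ℝ} (hh : StrongConvexOn univ m h)
    (hd : Differentiable ℝ h) (hH : HasFDerivAt (gradient h) H y) (v : V) :
    m * ‖v‖ ^ 2 ≤ ⟪H v, v⟫ := by
  have hq := hasGradientAt_half_mul_norm_sq (V := V) m
  have hgrad : gradient (fun x => h x - m / 2 * ‖x‖ ^ 2) = fun x => gradient h x - m • x :=
    gradient_eq fun x => by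
      rw [hasGradientAt_iff_hasFDerivAt, map_sub]
      exact (hd x).hasGradientAt.hasFDerivAt.sub (hq x).hasFDerivAt
  have hH' : HasFDerivAt (gradient fun x => h x - m / 2 * ‖x‖ ^ 2) (H - m • .id ℝ V) y := by
    rw [hgrad]
    exact hH.sub ((hasFDerivAt_id y).const_smul m)
  have := (strongConvexOn_iff_convex.1 hh).inner_hessian_apply_self_nonneg
    (hd.sub fun x => (hq x).differentiableAt) hH' v
  simpa [inner_sub_left, real_inner_smul_left, real_inner_self_eq_norm_sq] using this

theorem ContDiffAt.isSelfAdjoint_fderiv_gradient (hh : ContDiffAt ℝ 2 h y) :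
    IsSelfAdjoint (fderiv ℝ (gradient h) y) := by
  set L : StrongDual ℝ V →L[ℝ] V := (toDual ℝ V).symm.toLinearIsometry.toContinuousLinearMap
  set D := fderiv ℝ (fderiv ℝ h) y
  have hD : HasFDerivAt (fderiv ℝ h) D y :=
    ((hh.fderiv_right (m := 1) le_rfl).differentiableAt one_ne_zero).hasFDerivAt
  have hgrad : fderiv ℝ (gradient h) y = L ∘L D := (L.hasFDerivAt.comp y hD).fderiv
  rw [ContinuousLinearMap.isSelfAdjoint_iff_isSymmetric, hgrad]
  intro v w
  change ⟪(toDual ℝ V).symm (D v), w⟫ = ⟪v, (toDual ℝ V).symm (D w)⟫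
  rw [real_inner_comm _ v, toDual_symm_apply, toDual_symm_apply]
  exact hh.isSymmSndFDerivAt (by simp) v w

theorem ContinuousLinearMap.isInvertible_of_coercive {T : V →L[ℝ] V} {c : ℝ} (hc : 0 < c)
    (hT : ∀ v, c * ‖v‖ ^ 2 ≤ ⟪T v, v⟫) : T.IsInvertible := by
  have hB : IsCoercive ((innerSL ℝ : V →L[ℝ] V →L[ℝ] ℝ) ∘L T) :=
    ⟨c, hc, fun v => by rw [mul_assoc, ← sq]; exact hT v⟩
  refine ⟨hB.continuousLinearEquivOfBilin, ?_⟩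
  ext v
  exact ext_inner_right ℝ fun w => hB.continuousLinearEquivOfBilin_apply v w

end Hessian

section Partial

variable {𝕜 : Type*} [NontriviallyNormedField 𝕜]
  {E₁ E₂ G : Type*} [NormedAddCommGroup E₁] [NormedSpace 𝕜 E₁] [NormedAddCommGroup E₂]
  [NormedSpace 𝕜 E₂] [NormedAddCommGroup G] [NormedSpace 𝕜 G]

theorem DifferentiableAt.fderiv_comp_prodMk_left {φ : E₁ × E₂ → G} {x : E₁} {y : E₂}
    (hφ : DifferentiableAt 𝕜 φ (x, y)) :
    fderiv 𝕜 (fun x' => φ (x', y)) x = fderiv 𝕜 φ (x, y) ∘L inl 𝕜 E₁ E₂ :=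
  (hφ.hasFDerivAt.comp x (hasFDerivAt_prodMk_left x y)).fderiv

theorem DifferentiableAt.fderiv_comp_prodMk_right {φ : E₁ × E₂ → G} {x : E₁} {y : E₂}
    (hφ : DifferentiableAt 𝕜 φ (x, y)) :
    fderiv 𝕜 (fun y' => φ (x, y')) y = fderiv 𝕜 φ (x, y) ∘L inr 𝕜 E₁ E₂ :=
  (hφ.hasFDerivAt.comp y (hasFDerivAt_prodMk_right x y)).fderiv

theorem HasStrictFDerivAt.hasFDerivAt_of_zero_set_eq_graph [CompleteSpace E₁] [CompleteSpace E₂]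
    [CompleteSpace G] {φ : E₁ × E₂ → G} {Φ : E₁ × E₂ →L[𝕜] G} {y : E₁ → E₂} {x : E₁}
    (hφ : HasStrictFDerivAt φ Φ (x, y x)) (hΦ : (Φ ∘L inr 𝕜 E₁ E₂).IsInvertible)
    (hgraph : ∀ x z, φ (x, z) = 0 ↔ z = y x) :
    HasFDerivAt y (-(Φ ∘L inr 𝕜 E₁ E₂).inverse ∘L (Φ ∘L inl 𝕜 E₁ E₂)) x := by
  refine (hφ.hasStrictFDerivAt_implicitFunctionOfProdDomain hΦ).hasFDerivAt.congr_of_eventuallyEq ?_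
  filter_upwards [hφ.eventually_apply_implicitFunctionOfProdDomain hΦ] with x' hx'
  exact ((hgraph _ _).1 (hx'.trans ((hgraph _ _).2 rfl))).symm

end Partial

theorem fderiv_apply_eq_inner_gradx_add_inner_grady {f : E × F → ℝ} {x : E} {y : F}
    (hf : DifferentiableAt ℝ f (x, y)) (u : E) (v : F) :
    fderiv ℝ f (x, y) (u, v) = ⟪gradx f x y, u⟫ + ⟪grady f x y, v⟫ := by
  rw [gradx, grady, inner_gradient_left, inner_gradient_left, hf.fderiv_comp_prodMk_left,
    hf.fderiv_comp_prodMk_right, ← comp_inl_add_comp_inr]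

theorem hasGradientAt_comp_prodMk {f : E × F → ℝ} {ψ : E → F} {D : E →L[ℝ] F} {x : E}
    (hf : DifferentiableAt ℝ f (x, ψ x)) (hψ : HasFDerivAt ψ D x) :
    HasGradientAt (fun x' => f (x', ψ x')) (gradx f x (ψ x) + adjoint D (grady f x (ψ x))) x := by
  rw [hasGradientAt_iff_hasFDerivAt]
  refine (hf.hasFDerivAt.comp x ((hasFDerivAt_id x).prodMk hψ)).congr_fderiv ?_
  ext u
  simp [fderiv_apply_eq_inner_gradx_add_inner_grady hf, adjoint_inner_left]

section

set_option linter.unusedSectionVars false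

variable {g : E × F → ℝ}

theorem contDiff_grady (hg : ContDiff ℝ 2 g) : ContDiff ℝ 1 fun p : E × F => grady g p.1 p.2 := by
  set L : StrongDual ℝ F →L[ℝ] F := (toDual ℝ F).symm.toLinearIsometry.toContinuousLinearMap
  have hgrad : (fun p : E × F => grady g p.1 p.2) = fun p => L (fderiv ℝ g p ∘L inr ℝ E F) :=
    funext fun p => by
      rw [grady, gradient, (hg.differentiable two_ne_zero p).fderiv_comp_prodMk_right]
      rfl
  rw [hgrad]
  exact L.contDiff.comp ((hg.fderiv_right le_rfl).clm_comp contDiff_const)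

theorem hasFDerivAt_grady (hg : ContDiff ℝ 2 g) (x : E) (y : F) :
    HasFDerivAt (grady g x) (hessyy g x y) y :=
  (((contDiff_grady hg).differentiable one_ne_zero (x, y)).comp y
    (hasFDerivAt_prodMk_right x y).differentiableAt).hasFDerivAt

theorem isSelfAdjoint_hessyy (hg : ContDiff ℝ 2 g) (x : E) (y : F) :
    IsSelfAdjoint (hessyy g x y) :=
  (hg.comp (contDiff_const.prodMk contDiff_id)).contDiffAt.isSelfAdjoint_fderiv_gradient

theorem inner_hessyy_apply_self_ge (hg : ContDiff ℝ 2 g) {μ : ℝ} {x : E}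
    (hsc : StrongConvexOn univ μ fun y => g (x, y)) (y v : F) :
    μ * ‖v‖ ^ 2 ≤ ⟪hessyy g x y v, v⟫ :=
  hsc.inner_hessian_apply_self_ge ((hg.comp (contDiff_const.prodMk contDiff_id)).differentiable
    two_ne_zero) (hasFDerivAt_grady hg x y) v

theorem grady_eq_zero_iff (hg : Differentiable ℝ g) {μ : ℝ} (hμ : 0 ≤ μ) {ystar : E → F}
    (hsc : ∀ x, StrongConvexOn univ μ fun y => g (x, y))
    (hmin : ∀ x y, g (x, ystar x) ≤ g (x, y))
    (huniq : ∀ x y, (∀ z, g (x, y) ≤ g (x, z)) → y = ystar x) (x : E) (z : F) :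
    grady g x z = 0 ↔ z = ystar x := by
  constructor
  · intro hz
    have hd : HasGradientAt (fun y => g (x, y)) (grady g x z) z :=
      ((hg (x, z)).comp z (hasFDerivAt_prodMk_right x z).differentiableAt).hasGradientAt
    rw [hz, hasGradientAt_iff_hasFDerivAt, map_zero] at hd
    have hconv := (hsc x).convexOn fun r => by positivity
    exact huniq x z fun w => hconv.isMinOn_of_hasFDerivAt_eq_zero hd (mem_univ w)
  · rintro rfl
    have hloc : IsLocalMin (fun y => g (x, y)) (ystar x) := Eventually.of_forall (hmin x)
    rw [grady, gradient, hloc.fderiv_eq_zero, map_zero]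

end

theorem hypergradient_formula_general
    (f g : E × F → ℝ) (ystar : E → F)
    (μg : ℝ)
    (hf : ContDiff ℝ 1 f)
    (hg : ContDiff ℝ 2 g)
    (hμ : 0 < μg)
    (hsc : ∀ x : E, ConvexOn ℝ Set.univ (fun y : F => g (x, y) - μg / 2 * ‖y‖ ^ 2))
    (hmin : ∀ x y, g (x, ystar x) ≤ g (x, y))
    (huniq : ∀ x y, (∀ z, g (x, y) ≤ g (x, z)) → y = ystar x) :
    ∀ x : E, HasGradientAt (fun x' => f (x', ystar x')) (barGrad f g x (ystar x)) x := by
  intro x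
  have hsc' (x : E) : StrongConvexOn univ μg fun y => g (x, y) :=
    strongConvexOn_iff_convex.2 (hsc x)
  set φ : E × F → F := fun p => grady g p.1 p.2
  have hφ : HasStrictFDerivAt φ (fderiv ℝ φ (x, ystar x)) (x, ystar x) :=
    (contDiff_grady hg).contDiffAt.hasStrictFDerivAt one_ne_zero
  have hH : fderiv ℝ φ (x, ystar x) ∘L inr ℝ E F = hessyy g x (ystar x) :=
    hφ.differentiableAt.fderiv_comp_prodMk_right.symm
  have hA : fderiv ℝ φ (x, ystar x) ∘L inl ℝ E F = fderiv ℝ (fun x' => grady g x' (ystar x)) x :=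
    hφ.differentiableAt.fderiv_comp_prodMk_left.symm
  have hinv : (hessyy g x (ystar x)).IsInvertible :=
    isInvertible_of_coercive hμ (inner_hessyy_apply_self_ge hg (hsc' x) (ystar x))
  have hy := hφ.hasFDerivAt_of_zero_set_eq_graph (by rwa [hH])
    (grady_eq_zero_iff (hg.differentiable two_ne_zero) hμ.le hsc' hmin huniq)
  rw [hH, hA] at hy
  convert hasGradientAt_comp_prodMk (hf.differentiable one_ne_zero _) hy using 1
  have hsa := (isSelfAdjoint_hessyy hg x (ystar x)).ringInverse.adjoint_eq
  rw [ringInverse_eq_inverse] at hsa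
  rw [barGrad, hessxy, ringInverse_eq_inverse]
  simp [adjoint_comp, hsa, sub_eq_add_neg]

/-- The function `l(x) = f(x, y*(x))` is differentiable and its gradient is the
hypergradient `∇̄f(x, y*(x))`. -/
theorem hypergradient_formula
    (f g : E × F → ℝ) (ystar : E → F)
    (Lfx Lfy Cfy Lg μg Lgxy Lgyy Cgxy : ℝ)
    (hf : ContDiff ℝ 1 f)
    (hfx : ∀ p q : E × F, ‖gradx f p.1 p.2 - gradx f q.1 q.2‖ ≤ Lfx * ‖p - q‖)
    (hfy : ∀ p q : E × F, ‖grady f p.1 p.2 - grady f q.1 q.2‖ ≤ Lfy * ‖p - q‖)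
    (hfyb : ∀ x y, ‖grady f x y‖ ≤ Cfy)
    (hg : ContDiff ℝ 2 g)
    (hgy : ∀ p q : E × F, ‖grady g p.1 p.2 - grady g q.1 q.2‖ ≤ Lg * ‖p - q‖)
    (hμ : 0 < μg)
    (hsc : ∀ x : E, ConvexOn ℝ Set.univ (fun y : F => g (x, y) - μg / 2 * ‖y‖ ^ 2))
    (hgxy : ∀ p q : E × F, ‖hessxy g p.1 p.2 - hessxy g q.1 q.2‖ ≤ Lgxy * ‖p - q‖)
    (hgyy : ∀ p q : E × F, ‖hessyy g p.1 p.2 - hessyy g q.1 q.2‖ ≤ Lgyy * ‖p - q‖)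
    (hgxyb : ∀ x y, ‖hessxy g x y‖ ≤ Cgxy)
    (hmin : ∀ x y, g (x, ystar x) ≤ g (x, y))
    (huniq : ∀ x y, (∀ z, g (x, y) ≤ g (x, z)) → y = ystar x) :
    ∀ x : E, HasGradientAt (fun x' => f (x', ystar x')) (barGrad f g x (ystar x)) x :=
  hypergradient_formula_general f g ystar μg hf hg hμ hsc hmin huniq
end
end

section
/- For i = 1,…,m let l_i : E → ℝ be differentiable with L_l-Lipschitz gradient, and set l := (1/m)∑_{i=1}^m l_i. Let x₁,…,x_m ∈ E with average x̄ := (1/m)∑_i x_i, let p_i, b_i, h_i ∈ E and y_i, y*_i ∈ F be vectors such that ‖h_i − ∇l_i(x_i)‖ ≤ L_f ‖y*_i − y_i‖ for each i (where L_f ≥ 0), and define e_i := p_i − h_i − b_i, ū := (1/m)∑_i p_i, and x̄⁺ := x̄ − α ū for a step size α ≥ 0. Then l(x̄⁺) − l(x̄) ≤ −(α/2)‖∇l(x̄)‖² − (α/2 − L_l α²/2)‖ū‖² + (2α/m)∑_i ‖e_i‖² + (2L_l² α/m)∑_i ‖x̄ − x_i‖² + (2L_f² α/m)∑_i ‖y*_i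 − y_i‖² + (2α/m)∑_i ‖b_i‖². -/
/-!
The averaged objective has the averaged gradient `G`, which is again `Ll`-Lipschitz, so the
descent lemma gives `l(x̄ - α ū) ≤ l(x̄) - α ⟪G x̄, ū⟫ + Ll α² ‖ū‖² / 2`. Polarizing the inner
product leaves the gap `(α / 2) ‖G x̄ - ū‖²`. Since `∇lᵢ(x̄) - pᵢ` is the sum of the four errors
`∇lᵢ(x̄) - ∇lᵢ(xᵢ)`, `∇lᵢ(xᵢ) - hᵢ`, `-eᵢ`, `-bᵢ`, the estimate `‖v₁ + ⋯ + v₄‖² ≤ 4 ∑ ‖vₖ‖²`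
together with Jensen's inequality for the average bounds the gap by the last four terms.
-/

open Finset InnerProductSpace

section NormSq

variable {ι E : Type*} [SeminormedAddCommGroup E]

theorem norm_sum_sq_le_card_mul_sum_sq (s : Finset ι) (v : ι → E) :
    ‖∑ i ∈ s, v i‖ ^ 2 ≤ #s * ∑ i ∈ s, ‖v i‖ ^ 2 :=
  (pow_le_pow_left₀ (norm_nonneg _) (norm_sum_le s v) 2).trans
    (sq_sum_le_card_mul_sum_sq (s := s) (f := fun i => ‖v i‖))

theorem norm_add_add_add_sq_le (a b c d : E) :
    ‖a + b + c + d‖ ^ 2 ≤ 4 * (‖a‖ ^ 2 + ‖b‖ ^ 2 + ‖c‖ ^ 2 + ‖d‖ ^ 2) := by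
  simpa [Fin.sum_univ_four, add_assoc] using
    norm_sum_sq_le_card_mul_sum_sq (univ : Finset (Fin 4)) ![a, b, c, d]

theorem norm_sub_sq_le_four_mul {a c h e b p : E} {A C : ℝ} (he : e = p - h - b)
    (hA : ‖a - c‖ ≤ A) (hC : ‖c - h‖ ≤ C) :
    ‖a - p‖ ^ 2 ≤ 4 * (A ^ 2 + C ^ 2 + ‖e‖ ^ 2 + ‖b‖ ^ 2) := by
  have hsplit : a - p = (a - c) + (c - h) + -e + -b := by rw [he]; abel
  calc ‖a - p‖ ^ 2 ≤ 4 * (‖a - c‖ ^ 2 + ‖c - h‖ ^ 2 + ‖e‖ ^ 2 + ‖b‖ ^ 2) := by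
        simpa only [hsplit, norm_neg] using norm_add_add_add_sq_le (a - c) (c - h) (-e) (-b)
    _ ≤ 4 * (A ^ 2 + C ^ 2 + ‖e‖ ^ 2 + ‖b‖ ^ 2) := by gcongr

variable [NormedSpace ℝ E] [Fintype ι]

theorem norm_average_sq_le (v : ι → E) :
    ‖(1 / (Fintype.card ι : ℝ)) • ∑ i, v i‖ ^ 2 ≤
      (1 / (Fintype.card ι : ℝ)) * ∑ i, ‖v i‖ ^ 2 := by
  set n : ℝ := (Fintype.card ι : ℝ)
  calc ‖(1 / n) • ∑ i, v i‖ ^ 2 = (1 / n) ^ 2 * ‖∑ i, v i‖ ^ 2 := by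
        rw [norm_smul, mul_pow, Real.norm_of_nonneg (by positivity)]
    _ ≤ (1 / n) ^ 2 * (n * ∑ i, ‖v i‖ ^ 2) := by
        gcongr; exact norm_sum_sq_le_card_mul_sum_sq univ v
    _ = (1 / n) * ∑ i, ‖v i‖ ^ 2 := by
        rw [← mul_assoc, one_div, sq]
        congr 1
        simpa using mul_self_mul_inv n⁻¹

theorem norm_average_sub_average_le [Nonempty ι] {X : Type*} [SeminormedAddCommGroup X]
    (g : ι → X → E) (L : ℝ) (hg : ∀ i z w, ‖g i z - g i w‖ ≤ L * ‖z - w‖) (z w : X) :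
    ‖(1 / (Fintype.card ι : ℝ)) • ∑ i, g i z - (1 / (Fintype.card ι : ℝ)) • ∑ i, g i w‖ ≤
      L * ‖z - w‖ := by
  have hn : (0 : ℝ) < Fintype.card ι := by exact_mod_cast Fintype.card_pos
  rw [← smul_sub, ← sum_sub_distrib, norm_smul, Real.norm_of_nonneg (by positivity)]
  calc 1 / (Fintype.card ι : ℝ) * ‖∑ i, (g i z - g i w)‖
      ≤ 1 / (Fintype.card ι : ℝ) * ∑ _i : ι, L * ‖z - w‖ := by
        gcongr; exact (norm_sum_le _ _).trans (sum_le_sum fun i _ => hg i z w)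
    _ = L * ‖z - w‖ := by
        rw [sum_const, card_univ, nsmul_eq_mul]; field_simp

end NormSq

section Gradient

variable {E : Type*} [NormedAddCommGroup E] [InnerProductSpace ℝ E] [CompleteSpace E]

theorem hasGradientAt_const_mul_sum {ι : Type*} [Fintype ι] {f : ι → E → ℝ} {f' : ι → E}
    {x : E} (hf : ∀ i, HasGradientAt (f i) (f' i) x) (c : ℝ) :
    HasGradientAt (fun z => c * ∑ i, f i z) (c • ∑ i, f' i) x := by
  rw [hasGradientAt_iff_hasFDerivAt, map_smul, map_sum]
  exact (HasFDerivAt.fun_sum fun i _ => (hf i).hasFDerivAt).const_smul c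

theorem map_add_le_of_lipschitz_gradient {f : E → ℝ} {g : E → E} {L : ℝ}
    (hf : ∀ z, HasGradientAt f (g z) z) (hg : ∀ z w, ‖g z - g w‖ ≤ L * ‖z - w‖) (x d : E) :
    f (x + d) ≤ f x + ⟪g x, d⟫_ℝ + L / 2 * ‖d‖ ^ 2 := by
  set ψ : ℝ → ℝ := fun t => f (x + t • d) - t * ⟪g x, d⟫_ℝ - L / 2 * ‖d‖ ^ 2 * t ^ 2
  have hψ : ∀ t, HasDerivAt ψ (⟪g (x + t • d) - g x, d⟫_ℝ - L * ‖d‖ ^ 2 * t) t := by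
    intro t
    have hline : HasDerivAt (fun s : ℝ => x + s • d) d t := by
      simpa using ((hasDerivAt_id t).smul_const d).const_add x
    have hf_line := (hf (x + t • d)).hasFDerivAt.comp_hasDerivAt t hline
    rw [toDual_apply_apply] at hf_line
    refine ((hf_line.sub ((hasDerivAt_id t).mul_const ⟪g x, d⟫_ℝ)).sub
      (((hasDerivAt_id t).pow 2).const_mul (L / 2 * ‖d‖ ^ 2))).congr_deriv ?_
    simp only [inner_sub_left, id]
    ring
  have hψ_nonpos : ∀ t ∈ interior (Set.Ici (0 : ℝ)),
      ⟪g (x + t • d) - g x, d⟫_ℝ - L * ‖d‖ ^ 2 * t ≤ 0 := by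
    intro t ht
    rw [interior_Ici, Set.mem_Ioi] at ht
    have hgt : ‖g (x + t • d) - g x‖ ≤ L * (t * ‖d‖) := by
      simpa [norm_smul, abs_of_pos ht] using hg (x + t • d) x
    rw [sub_nonpos]
    calc ⟪g (x + t • d) - g x, d⟫_ℝ ≤ ‖g (x + t • d) - g x‖ * ‖d‖ := real_inner_le_norm _ _
      _ ≤ L * (t * ‖d‖) * ‖d‖ := by gcongr
      _ = L * ‖d‖ ^ 2 * t := by ring
  have hψ_anti : AntitoneOn ψ (Set.Ici 0) :=
    antitoneOn_of_hasDerivWithinAt_nonpos (convex_Ici 0)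
      (continuous_iff_continuousAt.mpr fun t => (hψ t).continuousAt).continuousOn
      (fun t _ => (hψ t).hasDerivWithinAt) hψ_nonpos
  have := hψ_anti Set.self_mem_Ici (Set.mem_Ici.mpr zero_le_one) zero_le_one
  simp only [ψ] at this
  norm_num at this
  linarith

theorem map_sub_smul_sub_le_of_lipschitz_gradient {f : E → ℝ} {g : E → E} {L : ℝ}
    (hf : ∀ z, HasGradientAt f (g z) z) (hg : ∀ z w, ‖g z - g w‖ ≤ L * ‖z - w‖) (x u : E) (α : ℝ) :
    f (x - α • u) - f x ≤
      -(α / 2) * ‖g x‖ ^ 2 - (α / 2 - L * α ^ 2 / 2) * ‖u‖ ^ 2 + α / 2 * ‖g x - u‖ ^ 2 := by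
  have hdesc := map_add_le_of_lipschitz_gradient hf hg x (-(α • u))
  rw [← sub_eq_add_neg, inner_neg_right, real_inner_smul_right, norm_neg, norm_smul, mul_pow,
    Real.norm_eq_abs, sq_abs] at hdesc
  linear_combination hdesc - α / 2 * norm_sub_sq_real (g x) u

end Gradient

theorem upper_level_descent_general
    {E F : Type*} [NormedAddCommGroup E] [InnerProductSpace ℝ E] [FiniteDimensional ℝ E]
    [NormedAddCommGroup F]
    (m : ℕ) (hm : 0 < m)
    (l : Fin m → E → ℝ) (Ll Lf : ℝ)
    (hdiff : ∀ i, Differentiable ℝ (l i))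
    (hlip : ∀ (i) (x₁ x₂ : E), ‖gradient (l i) x₁ - gradient (l i) x₂‖ ≤ Ll * ‖x₁ - x₂‖)
    (x p b h : Fin m → E) (y ystar : Fin m → F)
    (hh : ∀ i, ‖h i - gradient (l i) (x i)‖ ≤ Lf * ‖ystar i - y i‖)
    (e : Fin m → E) (he : ∀ i, e i = p i - h i - b i)
    (α : ℝ) (hα : 0 ≤ α)
    (xbar ubar xbarplus : E)
    (hubar : ubar = (1 / (m : ℝ)) • ∑ i, p i)
    (hxbarplus : xbarplus = xbar - α • ubar) :
    (fun z => (1 / (m : ℝ)) * ∑ i, l i z) xbarplus -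
        (fun z => (1 / (m : ℝ)) * ∑ i, l i z) xbar ≤
      -(α / 2) * ‖gradient (fun z => (1 / (m : ℝ)) * ∑ i, l i z) xbar‖ ^ 2 -
        (α / 2 - Ll * α ^ 2 / 2) * ‖ubar‖ ^ 2 +
        (2 * α / (m : ℝ)) * ∑ i, ‖e i‖ ^ 2 +
        (2 * Ll ^ 2 * α / (m : ℝ)) * ∑ i, ‖xbar - x i‖ ^ 2 +
        (2 * Lf ^ 2 * α / (m : ℝ)) * ∑ i, ‖ystar i - y i‖ ^ 2 +
        (2 * α / (m : ℝ)) * ∑ i, ‖b i‖ ^ 2 := by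
  have : Nonempty (Fin m) := ⟨⟨0, hm⟩⟩
  set G : E → E := fun z => (1 / (m : ℝ)) • ∑ i, gradient (l i) z
  have hG : ∀ z, HasGradientAt (fun z => (1 / (m : ℝ)) * ∑ i, l i z) (G z) z := fun z =>
    hasGradientAt_const_mul_sum (fun i => (hdiff i z).hasGradientAt) _
  have hG_lip : ∀ z w, ‖G z - G w‖ ≤ Ll * ‖z - w‖ := by
    simpa [G] using norm_average_sub_average_le (fun i => gradient (l i)) Ll hlip
  have hgap : ‖G xbar - ubar‖ ^ 2 ≤ (1 / (m : ℝ)) * ∑ i,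
      4 * (Ll ^ 2 * ‖xbar - x i‖ ^ 2 + Lf ^ 2 * ‖ystar i - y i‖ ^ 2 + ‖e i‖ ^ 2 + ‖b i‖ ^ 2) := by
    have havg := norm_average_sq_le fun i => gradient (l i) xbar - p i
    rw [Fintype.card_fin] at havg
    rw [hubar, ← smul_sub, ← sum_sub_distrib]
    refine havg.trans ?_
    gcongr with i
    simpa only [mul_pow] using
      norm_sub_sq_le_four_mul (he i) (hlip i xbar (x i)) ((norm_sub_rev _ _).trans_le (hh i))
  have hgap_sum : α / 2 * ((1 / (m : ℝ)) * ∑ i,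
      4 * (Ll ^ 2 * ‖xbar - x i‖ ^ 2 + Lf ^ 2 * ‖ystar i - y i‖ ^ 2 + ‖e i‖ ^ 2 + ‖b i‖ ^ 2)) =
      (2 * α / (m : ℝ)) * ∑ i, ‖e i‖ ^ 2 + (2 * Ll ^ 2 * α / (m : ℝ)) * ∑ i, ‖xbar - x i‖ ^ 2 +
        (2 * Lf ^ 2 * α / (m : ℝ)) * ∑ i, ‖ystar i - y i‖ ^ 2 +
        (2 * α / (m : ℝ)) * ∑ i, ‖b i‖ ^ 2 := by
    simp only [← mul_sum, sum_add_distrib]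
    ring
  have hstep := map_sub_smul_sub_le_of_lipschitz_gradient hG hG_lip xbar ubar α
  rw [(hG xbar).gradient, hxbarplus]
  linarith [mul_le_mul_of_nonneg_left hgap (by positivity : 0 ≤ α / 2)]

/-- Lemma 4 (pathwise): per-iterate descent of the upper-level objective after one averaged
consensus-SGD step `x̄⁺ = x̄ − α ū`. -/
theorem upper_level_descent
    {E F : Type*} [NormedAddCommGroup E] [InnerProductSpace ℝ E] [FiniteDimensional ℝ E]
    [NormedAddCommGroup F] [InnerProductSpace ℝ F] [FiniteDimensional ℝ F]
    (m : ℕ) (hm : 0 < m)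
    (l : Fin m → E → ℝ) (Ll Lf : ℝ) (hLf : 0 ≤ Lf)
    (hdiff : ∀ i, Differentiable ℝ (l i))
    (hlip : ∀ (i) (x₁ x₂ : E), ‖gradient (l i) x₁ - gradient (l i) x₂‖ ≤ Ll * ‖x₁ - x₂‖)
    (x p b h : Fin m → E) (y ystar : Fin m → F)
    (hh : ∀ i, ‖h i - gradient (l i) (x i)‖ ≤ Lf * ‖ystar i - y i‖)
    (e : Fin m → E) (he : ∀ i, e i = p i - h i - b i)
    (α : ℝ) (hα : 0 ≤ α)
    (xbar ubar xbarplus : E)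
    (hxbar : xbar = (1 / (m : ℝ)) • ∑ i, x i)
    (hubar : ubar = (1 / (m : ℝ)) • ∑ i, p i)
    (hxbarplus : xbarplus = xbar - α • ubar) :
    (fun z => (1 / (m : ℝ)) * ∑ i, l i z) xbarplus -
        (fun z => (1 / (m : ℝ)) * ∑ i, l i z) xbar ≤
      -(α / 2) * ‖gradient (fun z => (1 / (m : ℝ)) * ∑ i, l i z) xbar‖ ^ 2 -
        (α / 2 - Ll * α ^ 2 / 2) * ‖ubar‖ ^ 2 +
        (2 * α / (m : ℝ)) * ∑ i, ‖e i‖ ^ 2 +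
        (2 * Ll ^ 2 * α / (m : ℝ)) * ∑ i, ‖xbar - x i‖ ^ 2 +
        (2 * Lf ^ 2 * α / (m : ℝ)) * ∑ i, ‖ystar i - y i‖ ^ 2 +
        (2 * α / (m : ℝ)) * ∑ i, ‖b i‖ ^ 2 :=
  upper_level_descent_general m hm l Ll Lf hdiff hlip x p b h y ystar hh e he α hα xbar ubar
    xbarplus hubar hxbarplus
end

section
/- Let (Ω, 𝒜, P) be a probability space, E and F finite-dimensional real inner product spaces, h : E × F → E, and Ĝ : E × F × Ω → E such that for every (x, y) the map ω ↦ Ĝ(x, y, ω) is square-integrable with mean ∫ Ĝ(x, y, ω) dP(ω) = h(x, y) and variance ∫ ‖Ĝ(x, y, ω) − h(x, y)‖² dP(ω) ≤ σ_f², and such that the mean-square Lipschitz bound ∫ ‖Ĝ(x₁, y₁, ω) − Ĝ(x₂, y₂, ω)‖² dP(ω) ≤ 2 L_K² (‖x₁ − x₂‖² + ‖y₁ − y₂‖²) holds for all (x₁, y₁), (x₂, y₂). Fix x, x⁺ ∈ E, y ∈ F, w, e^g ∈ F, p ∈ E, β ≥ 0, η ∈ [0, 1], set y⁺ := y − β(w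 + e^g), e := p − h(x, y), and define e⁺(ω) := Ĝ(x⁺, y⁺, ω) + (1 − η)(p − Ĝ(x, y, ω)) − h(x⁺, y⁺). Then ∫ ‖e⁺(ω)‖² dP(ω) ≤ (1 − η)² ‖e‖² + 2η² σ_f² + 4(1 − η)² L_K² ‖x⁺ − x‖² + 8(1 − η)² L_K² β² ‖e^g‖² + 8(1 − η)² L_K² β² ‖w‖². -/
/-!
Write `e⁺ = (1 - η) e + Z` with `Z := (Ĝ⁺ - h⁺) - (1 - η) (Ĝ - h)`. Since `Z` has mean zero the
cross term vanishes, so `E‖e⁺‖² = (1 - η)² ‖e‖² + E‖Z‖²`. Regrouping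
`Z = (1 - η) (D - E D) + η (Ĝ⁺ - h⁺)` with `D := Ĝ⁺ - Ĝ`, the bound `‖u + v‖² ≤ 2‖u‖² + 2‖v‖²`
and "variance ≤ second moment" give `E‖Z‖² ≤ 2 (1 - η)² E‖D‖² + 2 η² σ_f²`; finally the
mean-square Lipschitz bound controls `E‖D‖²` through `‖x⁺ - x‖` and `‖y⁺ - y‖ = β ‖w + e^g‖`.
-/

open MeasureTheory

lemma norm_add_sq_le_two_mul {E : Type*} [SeminormedAddCommGroup E] (u v : E) :
    ‖u + v‖ ^ 2 ≤ 2 * ‖u‖ ^ 2 + 2 * ‖v‖ ^ 2 := by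
  nlinarith [norm_add_le u v, norm_nonneg (u + v), add_sq_le (a := ‖u‖) (b := ‖v‖)]

lemma norm_smul_sq {E : Type*} [SeminormedAddCommGroup E] [NormedSpace ℝ E] (s : ℝ) (u : E) :
    ‖s • u‖ ^ 2 = s ^ 2 * ‖u‖ ^ 2 := by
  rw [norm_smul, mul_pow, Real.norm_eq_abs, sq_abs]

section

variable {Ω E : Type*} [MeasurableSpace Ω] {P : Measure Ω} [NormedAddCommGroup E]

lemma integral_norm_smul_add_smul_sq_le [NormedSpace ℝ E] {u v : Ω → E}
    (hu : MemLp u 2 P) (hv : MemLp v 2 P) (s t : ℝ) :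
    ∫ ω, ‖s • u ω + t • v ω‖ ^ 2 ∂P ≤
      2 * s ^ 2 * ∫ ω, ‖u ω‖ ^ 2 ∂P + 2 * t ^ 2 * ∫ ω, ‖v ω‖ ^ 2 ∂P := by
  have hu2 := (hu.integrable_norm_pow two_ne_zero).const_mul (2 * s ^ 2)
  have hv2 := (hv.integrable_norm_pow two_ne_zero).const_mul (2 * t ^ 2)
  calc ∫ ω, ‖s • u ω + t • v ω‖ ^ 2 ∂P
      ≤ ∫ ω, 2 * s ^ 2 * ‖u ω‖ ^ 2 + 2 * t ^ 2 * ‖v ω‖ ^ 2 ∂P := by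
        refine integral_mono
          (((hu.const_smul s).add (hv.const_smul t)).integrable_norm_pow two_ne_zero)
          (hu2.add hv2) fun ω => ?_
        have := norm_add_sq_le_two_mul (s • u ω) (t • v ω)
        rw [norm_smul_sq, norm_smul_sq] at this
        linarith
    _ = _ := by rw [integral_add hu2 hv2, integral_const_mul, integral_const_mul]

variable [IsProbabilityMeasure P] [NormedSpace ℝ E] [CompleteSpace E]

lemma integral_sub_integral_eq_zero {X : Ω → E} (hX : Integrable X P) :
    ∫ ω, (X ω - ∫ ω', X ω' ∂P) ∂P = 0 := by
  simp [integral_sub hX (integrable_const _)]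

end

section

variable {Ω E : Type*} [MeasurableSpace Ω] {P : Measure Ω} [IsProbabilityMeasure P]
  [NormedAddCommGroup E] [InnerProductSpace ℝ E] [CompleteSpace E]

lemma integral_norm_add_sq_of_integral_eq_zero (a : E) {Z : Ω → E} (hZ : MemLp Z 2 P)
    (hZ0 : ∫ ω, Z ω ∂P = 0) :
    ∫ ω, ‖a + Z ω‖ ^ 2 ∂P = ‖a‖ ^ 2 + ∫ ω, ‖Z ω‖ ^ 2 ∂P := by
  have hinner : Integrable (fun ω => 2 * inner ℝ a (Z ω)) P :=
    ((hZ.integrable one_le_two).const_inner a).const_mul 2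
  have hlinear : Integrable (fun ω => ‖a‖ ^ 2 + 2 * inner ℝ a (Z ω)) P :=
    (integrable_const _).add hinner
  simp_rw [norm_add_sq_real]
  rw [integral_add hlinear (hZ.integrable_norm_pow two_ne_zero),
    integral_add (integrable_const _) hinner, integral_const_mul,
    integral_inner (hZ.integrable one_le_two), hZ0]
  simp

lemma integral_norm_sub_integral_sq_le {X : Ω → E} (hX : MemLp X 2 P) :
    ∫ ω, ‖X ω - ∫ ω', X ω' ∂P‖ ^ 2 ∂P ≤ ∫ ω, ‖X ω‖ ^ 2 ∂P := by
  have hexpand := integral_norm_add_sq_of_integral_eq_zero (∫ ω', X ω' ∂P)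
    (Z := fun ω => X ω - ∫ ω', X ω' ∂P) (hX.sub (memLp_const _))
    (integral_sub_integral_eq_zero (hX.integrable one_le_two))
  simp only [add_sub_cancel] at hexpand
  linarith [sq_nonneg ‖∫ ω', X ω' ∂P‖]

lemma integral_norm_momentum_error_sq_le {A B : Ω → E} (hA : MemLp A 2 P) (hB : MemLp B 2 P)
    (e : E) (η : ℝ) :
    ∫ ω, ‖(1 - η) • e + (A ω - ∫ ω', A ω' ∂P) - (1 - η) • (B ω - ∫ ω', B ω' ∂P)‖ ^ 2 ∂P ≤
      (1 - η) ^ 2 * ‖e‖ ^ 2 + 2 * (1 - η) ^ 2 * ∫ ω, ‖A ω - B ω‖ ^ 2 ∂P +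
        2 * η ^ 2 * ∫ ω, ‖A ω - ∫ ω', A ω' ∂P‖ ^ 2 ∂P := by
  set a := ∫ ω, A ω ∂P
  set b := ∫ ω, B ω ∂P
  have hAc : MemLp (fun ω => A ω - a) 2 P := hA.sub (memLp_const a)
  have hBc : MemLp (fun ω => B ω - b) 2 P := hB.sub (memLp_const b)
  have hBs : MemLp (fun ω => (1 - η) • (B ω - b)) 2 P := hBc.const_smul _
  have hD : MemLp (fun ω => A ω - B ω) 2 P := hA.sub hB
  have hDc : MemLp (fun ω => A ω - B ω - ∫ ω', (A ω' - B ω') ∂P) 2 P := hD.sub (memLp_const _)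
  have hZ0 : ∫ ω, (A ω - a) - (1 - η) • (B ω - b) ∂P = 0 := by
    rw [integral_sub (hAc.integrable one_le_two) (hBs.integrable one_le_two),
      integral_smul, integral_sub_integral_eq_zero (hA.integrable one_le_two),
      integral_sub_integral_eq_zero (hB.integrable one_le_two), smul_zero, sub_zero]
  have hsplit : ∀ ω, (A ω - a) - (1 - η) • (B ω - b) =
      (1 - η) • (A ω - B ω - ∫ ω', (A ω' - B ω') ∂P) + η • (A ω - a) := by
    intro ω
    rw [integral_sub (hA.integrable one_le_two) (hB.integrable one_le_two)]
    module
  have hcentred := integral_norm_smul_add_smul_sq_le hDc hAc (1 - η) η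
  have hexpand := integral_norm_add_sq_of_integral_eq_zero ((1 - η) • e)
    (Z := fun ω => (A ω - a) - (1 - η) • (B ω - b)) (hAc.sub hBs) hZ0
  simp only [hsplit] at hexpand
  simp_rw [add_sub_assoc, hsplit, hexpand, norm_smul_sq]
  have hvariance := mul_le_mul_of_nonneg_left (integral_norm_sub_integral_sq_le hD)
    (by positivity : (0 : ℝ) ≤ 2 * (1 - η) ^ 2)
  linarith

end

theorem upper_momentum_error_shrink_general
    {E F Ω : Type*} [NormedAddCommGroup E] [InnerProductSpace ℝ E] [FiniteDimensional ℝ E]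
    [NormedAddCommGroup F] [InnerProductSpace ℝ F]
    [MeasurableSpace Ω] (P : Measure Ω) [IsProbabilityMeasure P]
    (h : E → F → E) (G : E → F → Ω → E) (σf LK : ℝ)
    (hL2 : ∀ (x : E) (y : F), MemLp (fun ω => G x y ω) 2 P)
    (hmean : ∀ (x : E) (y : F), ∫ ω, G x y ω ∂P = h x y)
    (hvar : ∀ (x : E) (y : F), ∫ ω, ‖G x y ω - h x y‖ ^ 2 ∂P ≤ σf ^ 2)
    (hlip : ∀ (x₁ x₂ : E) (y₁ y₂ : F),
      ∫ ω, ‖G x₁ y₁ ω - G x₂ y₂ ω‖ ^ 2 ∂P ≤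
        2 * LK ^ 2 * (‖x₁ - x₂‖ ^ 2 + ‖y₁ - y₂‖ ^ 2))
    (x xplus : E) (y w eg : F) (p : E) (β η : ℝ)
    (yplus : F) (hyplus : yplus = y - β • (w + eg))
    (e : E) (he : e = p - h x y)
    (eplus : Ω → E)
    (heplus : ∀ ω, eplus ω = G xplus yplus ω + (1 - η) • (p - G x y ω) - h xplus yplus) :
    ∫ ω, ‖eplus ω‖ ^ 2 ∂P ≤
      (1 - η) ^ 2 * ‖e‖ ^ 2 + 2 * η ^ 2 * σf ^ 2 +
        4 * (1 - η) ^ 2 * LK ^ 2 * ‖xplus - x‖ ^ 2 +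
        8 * (1 - η) ^ 2 * LK ^ 2 * β ^ 2 * ‖eg‖ ^ 2 +
        8 * (1 - η) ^ 2 * LK ^ 2 * β ^ 2 * ‖w‖ ^ 2 := by
  have hstep : ‖yplus - y‖ ^ 2 ≤ 2 * β ^ 2 * ‖w‖ ^ 2 + 2 * β ^ 2 * ‖eg‖ ^ 2 := by
    rw [hyplus, sub_sub_cancel_left, norm_neg, norm_smul_sq]
    nlinarith [norm_add_sq_le_two_mul w eg, sq_nonneg β]
  have hdecomp : ∀ ω, eplus ω = (1 - η) • e + (G xplus yplus ω - h xplus yplus) -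
      (1 - η) • (G x y ω - h x y) := by
    intro ω
    rw [heplus, he]
    module
  have key := integral_norm_momentum_error_sq_le (hL2 xplus yplus) (hL2 x y) e η
  simp only [hmean, ← hdecomp] at key
  linarith [mul_le_mul_of_nonneg_left (hlip xplus x yplus y)
      (by positivity : (0 : ℝ) ≤ 2 * (1 - η) ^ 2),
    mul_le_mul_of_nonneg_left (hvar xplus yplus) (by positivity : (0 : ℝ) ≤ 2 * η ^ 2),
    mul_le_mul_of_nonneg_left hstep (by positivity : (0 : ℝ) ≤ 4 * (1 - η) ^ 2 * LK ^ 2)]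

/-- Lemma 6 (single agent, one step): shrinking rate of the upper-level momentum-based
stochastic gradient estimation error. -/
theorem upper_momentum_error_shrink
    {E F Ω : Type*} [NormedAddCommGroup E] [InnerProductSpace ℝ E] [FiniteDimensional ℝ E]
    [NormedAddCommGroup F] [InnerProductSpace ℝ F] [FiniteDimensional ℝ F]
    [MeasurableSpace Ω] (P : Measure Ω) [IsProbabilityMeasure P]
    (h : E → F → E) (G : E → F → Ω → E) (σf LK : ℝ)
    (hL2 : ∀ (x : E) (y : F), MemLp (fun ω => G x y ω) 2 P)
    (hmean : ∀ (x : E) (y : F), ∫ ω, G x y ω ∂P = h x y)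
    (hvar : ∀ (x : E) (y : F), ∫ ω, ‖G x y ω - h x y‖ ^ 2 ∂P ≤ σf ^ 2)
    (hlip : ∀ (x₁ x₂ : E) (y₁ y₂ : F),
      ∫ ω, ‖G x₁ y₁ ω - G x₂ y₂ ω‖ ^ 2 ∂P ≤
        2 * LK ^ 2 * (‖x₁ - x₂‖ ^ 2 + ‖y₁ - y₂‖ ^ 2))
    (x xplus : E) (y w eg : F) (p : E) (β η : ℝ)
    (hβ : 0 ≤ β) (hη0 : 0 ≤ η) (hη1 : η ≤ 1)
    (yplus : F) (hyplus : yplus = y - β • (w + eg))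
    (e : E) (he : e = p - h x y)
    (eplus : Ω → E)
    (heplus : ∀ ω, eplus ω = G xplus yplus ω + (1 - η) • (p - G x y ω) - h xplus yplus) :
    ∫ ω, ‖eplus ω‖ ^ 2 ∂P ≤
      (1 - η) ^ 2 * ‖e‖ ^ 2 + 2 * η ^ 2 * σf ^ 2 +
        4 * (1 - η) ^ 2 * LK ^ 2 * ‖xplus - x‖ ^ 2 +
        8 * (1 - η) ^ 2 * LK ^ 2 * β ^ 2 * ‖eg‖ ^ 2 +
        8 * (1 - η) ^ 2 * LK ^ 2 * β ^ 2 * ‖w‖ ^ 2 :=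
  upper_momentum_error_shrink_general P h G σf LK hL2 hmean hvar hlip x xplus y w eg p β η yplus
    hyplus e he eplus heplus
end

section
/- Let M be a real m × m matrix, x₁,…,x_m, u₁,…,u_m ∈ E, x̄ := (1/m)∑_i x_i, ū := (1/m)∑_i u_i, α ≥ 0, c > 0, and λ ≥ 0. Assume M is doubly stochastic (all row sums and column sums equal 1) and satisfies the mixing property: for every v : {1,…,m} → E with ∑_i v_i = 0, ∑_i ‖∑_j M_{ij} • v_j‖² ≤ λ² ∑_i ‖v_i‖². Define x⁺_i := ∑_j M_{ij} • x_j − α u_i and x̄⁺ := (1/m)∑_i x⁺_i. Then ∑_{i=1}^m ‖x⁺_i − x̄⁺‖² ≤ (1 + c) λ² ∑_{i=1}^m ‖x_i − x̄‖² + (1 + 1/c) α² ∑_{i=1}^m ‖u_i − ū‖². -/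
/-!
The deviation of `x⁺ᵢ` from its mean splits as `∑ⱼ Mᵢⱼ (xⱼ - x̄) - α (uᵢ - ū)`: column
stochasticity makes the mean of `x⁺` equal to `x̄ - α ū`, and row stochasticity lets `x̄` be
pulled inside the mixing sum. Young's inequality `‖a - b‖² ≤ (1 + c)‖a‖² + (1 + 1/c)‖b‖²`
separates the two parts, and the mixing property applies to `xⱼ - x̄` because these deviations
sum to zero.
-/

open Finset

section Mean

variable {ι R E : Type*} [Fintype ι] [AddCommGroup E]

-- For empty `ι` both sides vanish, since `1 / 0 = 0` and the sum is empty.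
theorem sum_sub_one_div_card_smul_sum_eq_zero (𝕜 : Type*) [DivisionRing 𝕜] [CharZero 𝕜]
    [Module 𝕜 E] (v : ι → E) :
    ∑ i, (v i - (1 / (Fintype.card ι : 𝕜)) • ∑ j, v j) = 0 := by
  rcases isEmpty_or_nonempty ι with hι | hι
  · simp
  · rw [sum_sub_distrib, sum_const, card_univ, ← Nat.cast_smul_eq_nsmul 𝕜, smul_smul,
      mul_one_div_cancel (Nat.cast_ne_zero.mpr Fintype.card_ne_zero), one_smul,
      sub_self]

variable [Semiring R] [Module R E]

theorem sum_sum_smul_of_sum_col_eq_one (M : Matrix ι ι R) (hcol : ∀ j, ∑ i, M i j = 1)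
    (x : ι → E) : ∑ i, ∑ j, M i j • x j = ∑ j, x j := by
  rw [sum_comm]
  exact sum_congr rfl fun j _ => by rw [← sum_smul, hcol j, one_smul]

theorem sum_smul_sub_of_sum_eq_one (w : ι → R) (hw : ∑ j, w j = 1) (x : ι → E) (a : E) :
    ∑ j, w j • (x j - a) = ∑ j, w j • x j - a := by
  simp only [smul_sub, sum_sub_distrib, ← sum_smul, hw, one_smul]

end Mean

theorem add_sq_le_one_add_mul_sq_add_one_add_inv_mul_sq (a b c : ℝ) (hc : 0 < c) :
    (a + b) ^ 2 ≤ (1 + c) * a ^ 2 + (1 + 1 / c) * b ^ 2 := by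
  have hgap : (1 + c) * a ^ 2 + (1 + 1 / c) * b ^ 2 - (a + b) ^ 2 = (c * a - b) ^ 2 / c := by
    field_simp
    ring
  have : 0 ≤ (c * a - b) ^ 2 / c := by positivity
  linarith

theorem norm_sub_sq_le_one_add_mul_sq_add_one_add_inv_mul_sq {E : Type*}
    [SeminormedAddCommGroup E] (a b : E) (c : ℝ) (hc : 0 < c) :
    ‖a - b‖ ^ 2 ≤ (1 + c) * ‖a‖ ^ 2 + (1 + 1 / c) * ‖b‖ ^ 2 :=
  (pow_le_pow_left₀ (norm_nonneg _) (norm_sub_le a b) 2).trans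
    (add_sq_le_one_add_mul_sq_add_one_add_inv_mul_sq _ _ c hc)

theorem consensus_error_contraction_general
    {E : Type*} [NormedAddCommGroup E] [InnerProductSpace ℝ E]
    (m : ℕ) (M : Matrix (Fin m) (Fin m) ℝ)
    (hrow : ∀ i, ∑ j, M i j = 1) (hcol : ∀ j, ∑ i, M i j = 1)
    (lam : ℝ)
    (hmix : ∀ v : Fin m → E, (∑ i, v i) = 0 →
      ∑ i, ‖∑ j, M i j • v j‖ ^ 2 ≤ lam ^ 2 * ∑ i, ‖v i‖ ^ 2)
    (x u : Fin m → E) (α c : ℝ) (hc : 0 < c)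
    (xbar ubar : E)
    (hxbar : xbar = (1 / (m : ℝ)) • ∑ i, x i)
    (hubar : ubar = (1 / (m : ℝ)) • ∑ i, u i)
    (xplus : Fin m → E) (hxplus : ∀ i, xplus i = (∑ j, M i j • x j) - α • u i)
    (xbarplus : E) (hxbarplus : xbarplus = (1 / (m : ℝ)) • ∑ i, xplus i) :
    ∑ i, ‖xplus i - xbarplus‖ ^ 2 ≤
      (1 + c) * lam ^ 2 * ∑ i, ‖x i - xbar‖ ^ 2 +
        (1 + 1 / c) * α ^ 2 * ∑ i, ‖u i - ubar‖ ^ 2 := by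
  have hx_dev : ∑ i, (x i - xbar) = 0 := by
    simpa only [Fintype.card_fin, ← hxbar] using sum_sub_one_div_card_smul_sum_eq_zero ℝ x
  have hmean : xbarplus = xbar - α • ubar := by
    simp only [hxbarplus, hxplus, sum_sub_distrib, ← smul_sum,
      sum_sum_smul_of_sum_col_eq_one M hcol, smul_sub, hxbar, hubar, smul_comm α]
  have hdev : ∀ i, xplus i - xbarplus = ∑ j, M i j • (x j - xbar) - α • (u i - ubar) := by
    intro i
    rw [hxplus, hmean, sum_smul_sub_of_sum_eq_one _ (hrow i), smul_sub]
    abel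
  calc ∑ i, ‖xplus i - xbarplus‖ ^ 2
      ≤ ∑ i, ((1 + c) * ‖∑ j, M i j • (x j - xbar)‖ ^ 2
          + (1 + 1 / c) * (α ^ 2 * ‖u i - ubar‖ ^ 2)) := by
        refine sum_le_sum fun i _ => ?_
        rw [hdev, ← sq_abs α, ← mul_pow, ← Real.norm_eq_abs, ← norm_smul]
        exact norm_sub_sq_le_one_add_mul_sq_add_one_add_inv_mul_sq _ _ c hc
    _ = (1 + c) * ∑ i, ‖∑ j, M i j • (x j - xbar)‖ ^ 2
          + (1 + 1 / c) * α ^ 2 * ∑ i, ‖u i - ubar‖ ^ 2 := by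
        rw [sum_add_distrib, ← mul_sum, ← mul_sum, ← mul_sum, mul_assoc]
    _ ≤ (1 + c) * lam ^ 2 * ∑ i, ‖x i - xbar‖ ^ 2
          + (1 + 1 / c) * α ^ 2 * ∑ i, ‖u i - ubar‖ ^ 2 := by
        rw [mul_assoc (1 + c)]
        gcongr
        exact hmix _ hx_dev

/-- Lemma 9 (first claim): contraction of the consensus error of the upper-level iterates
after one consensus step with mixing matrix `M` and gradient step `−α uᵢ`. -/
theorem consensus_error_contraction
    {E : Type*} [NormedAddCommGroup E] [InnerProductSpace ℝ E] [FiniteDimensional ℝ E]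
    (m : ℕ) (hm : 0 < m) (M : Matrix (Fin m) (Fin m) ℝ)
    (hrow : ∀ i, ∑ j, M i j = 1) (hcol : ∀ j, ∑ i, M i j = 1)
    (lam : ℝ) (hlam : 0 ≤ lam)
    (hmix : ∀ v : Fin m → E, (∑ i, v i) = 0 →
      ∑ i, ‖∑ j, M i j • v j‖ ^ 2 ≤ lam ^ 2 * ∑ i, ‖v i‖ ^ 2)
    (x u : Fin m → E) (α c : ℝ) (hα : 0 ≤ α) (hc : 0 < c)
    (xbar ubar : E)
    (hxbar : xbar = (1 / (m : ℝ)) • ∑ i, x i)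
    (hubar : ubar = (1 / (m : ℝ)) • ∑ i, u i)
    (xplus : Fin m → E) (hxplus : ∀ i, xplus i = (∑ j, M i j • x j) - α • u i)
    (xbarplus : E) (hxbarplus : xbarplus = (1 / (m : ℝ)) • ∑ i, xplus i) :
    ∑ i, ‖xplus i - xbarplus‖ ^ 2 ≤
      (1 + c) * lam ^ 2 * ∑ i, ‖x i - xbar‖ ^ 2 +
        (1 + 1 / c) * α ^ 2 * ∑ i, ‖u i - ubar‖ ^ 2 :=
  consensus_error_contraction_general m M hrow hcol lam hmix x u α c hc xbar ubar hxbar hubar xplus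
    hxplus xbarplus hxbarplus
end

section
/- Let M be a real m × m matrix, u₁,…,u_m, p₁,…,p_m, p⁺₁,…,p⁺_m ∈ E, ū := (1/m)∑_i u_i, c > 0, and λ ≥ 0. Assume M is doubly stochastic (all row sums and column sums equal 1) and satisfies the mixing property: for every v : {1,…,m} → E with ∑_i v_i = 0, ∑_i ‖∑_j M_{ij} • v_j‖² ≤ λ² ∑_i ‖v_i‖². Define u⁺_i := ∑_j M_{ij} • u_j + p⁺_i − p_i and ū⁺ := (1/m)∑_i u⁺_i. Then ∑_{i=1}^m ‖u⁺_i − ū⁺‖² ≤ (1 + c) λ² ∑_{i=1}^m ‖u_i − ū‖² + (1 + 1/c) ∑_{i=1}^m ‖p⁺_i − p_i‖². -/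
/-!
With `q = p⁺ - p`, row sums one make `M` fix constants and column sums one make it preserve
sums, so `u⁺ᵢ - ū⁺ = ∑ⱼ Mᵢⱼ (uⱼ - ū) + (qᵢ - q̄)`. Young's inequality with weight `c` splits
the square; the mixing property applies to the first term because deviations from the mean sum
to zero, and centring `q` only decreases `∑ ‖qᵢ‖²`.
-/

open Finset

namespace GradientTracking

theorem norm_add_sq_le_weighted {E : Type*} [SeminormedAddCommGroup E] {c : ℝ} (hc : 0 < c)
    (a b : E) :
    ‖a + b‖ ^ 2 ≤ (1 + c) * ‖a‖ ^ 2 + (1 + 1 / c) * ‖b‖ ^ 2 := by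
  have amgm : 2 * ‖a‖ * ‖b‖ ≤ c * ‖a‖ ^ 2 + 1 / c * ‖b‖ ^ 2 := by
    have h : 0 ≤ (c * ‖a‖ - ‖b‖) ^ 2 / c := by positivity
    field_simp at h ⊢
    nlinarith [h]
  calc ‖a + b‖ ^ 2 ≤ (‖a‖ + ‖b‖) ^ 2 := by gcongr; exact norm_add_le a b
    _ ≤ _ := by nlinarith [amgm]

variable {ι E : Type*} [Fintype ι] [NormedAddCommGroup E] [InnerProductSpace ℝ E]

noncomputable def mean (v : ι → E) : E := (1 / (Fintype.card ι : ℝ)) • ∑ i, v i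

theorem card_smul_mean (v : ι → E) : (Fintype.card ι : ℝ) • mean v = ∑ i, v i := by
  rcases isEmpty_or_nonempty ι with hι | hι
  · simp
  · rw [mean, smul_smul, mul_one_div_cancel (by positivity), one_smul]

theorem sum_sub_mean (v : ι → E) : ∑ i, (v i - mean v) = 0 := by
  rw [sum_sub_distrib, sum_const, card_univ, ← Nat.cast_smul_eq_nsmul ℝ, card_smul_mean,
    sub_self]

theorem mean_add (v w : ι → E) : mean (fun i => v i + w i) = mean v + mean w := by
  simp only [mean, sum_add_distrib, smul_add]

theorem sum_norm_sub_mean_sq (v : ι → E) :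
    ∑ i, ‖v i - mean v‖ ^ 2 = ∑ i, ‖v i‖ ^ 2 - Fintype.card ι * ‖mean v‖ ^ 2 := by
  have hinner : ∑ i, inner ℝ (v i) (mean v) = Fintype.card ι * ‖mean v‖ ^ 2 := by
    rw [← sum_inner, ← card_smul_mean, real_inner_smul_left, real_inner_self_eq_norm_sq]
  simp only [norm_sub_sq_real, sum_add_distrib, sum_sub_distrib, ← mul_sum, hinner,
    sum_const, card_univ, nsmul_eq_mul]
  ring

theorem sum_norm_sub_mean_sq_le (v : ι → E) : ∑ i, ‖v i - mean v‖ ^ 2 ≤ ∑ i, ‖v i‖ ^ 2 := by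
  rw [sum_norm_sub_mean_sq]
  have : 0 ≤ (Fintype.card ι : ℝ) * ‖mean v‖ ^ 2 := by positivity
  linarith

section Mixing

variable {M : Matrix ι ι ℝ}

theorem mean_mix (hcol : ∀ j, ∑ i, M i j = 1) (v : ι → E) :
    mean (fun i => ∑ j, M i j • v j) = mean v := by
  rw [mean, mean, sum_comm]
  simp only [← sum_smul, hcol, one_smul]

theorem mix_sub_const (hrow : ∀ i, ∑ j, M i j = 1) (v : ι → E) (x : E) (i : ι) :
    ∑ j, M i j • (v j - x) = ∑ j, M i j • v j - x := by
  simp only [smul_sub, sum_sub_distrib, ← sum_smul, hrow i, one_smul]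

theorem mix_add_sub_mean (hrow : ∀ i, ∑ j, M i j = 1) (hcol : ∀ j, ∑ i, M i j = 1)
    (u q : ι → E) (i : ι) :
    (∑ j, M i j • u j + q i) - mean (fun i => ∑ j, M i j • u j + q i) =
      ∑ j, M i j • (u j - mean u) + (q i - mean q) := by
  rw [mean_add (fun i => ∑ j, M i j • u j), mean_mix hcol, mix_sub_const hrow]
  abel

theorem sum_norm_mix_add_sub_mean_sq_le (hrow : ∀ i, ∑ j, M i j = 1)
    (hcol : ∀ j, ∑ i, M i j = 1) {lam : ℝ}
    (hmix : ∀ v : ι → E, ∑ i, v i = 0 → ∑ i, ‖∑ j, M i j • v j‖ ^ 2 ≤ lam ^ 2 * ∑ i, ‖v i‖ ^ 2)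
    {c : ℝ} (hc : 0 < c) (u q : ι → E) :
    ∑ i, ‖(∑ j, M i j • u j + q i) - mean (fun i => ∑ j, M i j • u j + q i)‖ ^ 2 ≤
      (1 + c) * lam ^ 2 * ∑ i, ‖u i - mean u‖ ^ 2 + (1 + 1 / c) * ∑ i, ‖q i‖ ^ 2 := by
  simp only [mix_add_sub_mean hrow hcol]
  calc _ ≤ ∑ i, ((1 + c) * ‖∑ j, M i j • (u j - mean u)‖ ^ 2
          + (1 + 1 / c) * ‖q i - mean q‖ ^ 2) :=
        sum_le_sum fun i _ => norm_add_sq_le_weighted hc _ _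
    _ = (1 + c) * ∑ i, ‖∑ j, M i j • (u j - mean u)‖ ^ 2
          + (1 + 1 / c) * ∑ i, ‖q i - mean q‖ ^ 2 := by
        rw [sum_add_distrib, mul_sum, mul_sum]
    _ ≤ (1 + c) * (lam ^ 2 * ∑ i, ‖u i - mean u‖ ^ 2) + (1 + 1 / c) * ∑ i, ‖q i‖ ^ 2 := by
        gcongr _ * ?_ + _ * ?_
        · exact hmix _ (sum_sub_mean u)
        · exact sum_norm_sub_mean_sq_le q
    _ = _ := by ring

end Mixing

end GradientTracking

open GradientTracking in
theorem tracking_deviation_contraction_general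
    {E : Type*} [NormedAddCommGroup E] [InnerProductSpace ℝ E]
    (m : ℕ) (M : Matrix (Fin m) (Fin m) ℝ)
    (hrow : ∀ i, ∑ j, M i j = 1) (hcol : ∀ j, ∑ i, M i j = 1)
    (lam : ℝ)
    (hmix : ∀ v : Fin m → E, (∑ i, v i) = 0 →
      ∑ i, ‖∑ j, M i j • v j‖ ^ 2 ≤ lam ^ 2 * ∑ i, ‖v i‖ ^ 2)
    (u p pplus : Fin m → E) (c : ℝ) (hc : 0 < c)
    (ubar : E) (hubar : ubar = (1 / (m : ℝ)) • ∑ i, u i)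
    (uplus : Fin m → E) (huplus : ∀ i, uplus i = (∑ j, M i j • u j) + pplus i - p i)
    (ubarplus : E) (hubarplus : ubarplus = (1 / (m : ℝ)) • ∑ i, uplus i) :
    ∑ i, ‖uplus i - ubarplus‖ ^ 2 ≤
      (1 + c) * lam ^ 2 * ∑ i, ‖u i - ubar‖ ^ 2 +
        (1 + 1 / c) * ∑ i, ‖pplus i - p i‖ ^ 2 := by
  have huplus' : uplus = fun i => ∑ j, M i j • u j + (pplus i - p i) := by
    funext i
    rw [huplus, add_sub_assoc]
  have hmean (v : Fin m → E) : mean v = (1 / (m : ℝ)) • ∑ i, v i := by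
    rw [mean, Fintype.card_fin]
  rw [← hmean] at hubar hubarplus
  subst hubar hubarplus huplus'
  exact sum_norm_mix_add_sub_mean_sq_le hrow hcol hmix hc u _

/-- Lemma 9 (second claim): contraction of the deviation of the gradient-tracking variables
after one tracking update `u⁺ᵢ = ∑ⱼ Mᵢⱼ uⱼ + p⁺ᵢ − pᵢ`. -/
theorem tracking_deviation_contraction
    {E : Type*} [NormedAddCommGroup E] [InnerProductSpace ℝ E] [FiniteDimensional ℝ E]
    (m : ℕ) (hm : 0 < m) (M : Matrix (Fin m) (Fin m) ℝ)
    (hrow : ∀ i, ∑ j, M i j = 1) (hcol : ∀ j, ∑ i, M i j = 1)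
    (lam : ℝ) (hlam : 0 ≤ lam)
    (hmix : ∀ v : Fin m → E, (∑ i, v i) = 0 →
      ∑ i, ‖∑ j, M i j • v j‖ ^ 2 ≤ lam ^ 2 * ∑ i, ‖v i‖ ^ 2)
    (u p pplus : Fin m → E) (c : ℝ) (hc : 0 < c)
    (ubar : E) (hubar : ubar = (1 / (m : ℝ)) • ∑ i, u i)
    (uplus : Fin m → E) (huplus : ∀ i, uplus i = (∑ j, M i j • u j) + pplus i - p i)
    (ubarplus : E) (hubarplus : ubarplus = (1 / (m : ℝ)) • ∑ i, uplus i) :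
    ∑ i, ‖uplus i - ubarplus‖ ^ 2 ≤
      (1 + c) * lam ^ 2 * ∑ i, ‖u i - ubar‖ ^ 2 +
        (1 + 1 / c) * ∑ i, ‖pplus i - p i‖ ^ 2 :=
  tracking_deviation_contraction_general m M hrow hcol lam hmix u p pplus c hc ubar hubar uplus
    huplus ubarplus hubarplus
end
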